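/- For every α ∈ (1/2, 2), no global maximizer of the Takagi–Landsberg function f_α on [0,1] is a dyadic rational number (i.e., of the form k·2^{−n} with k, n nonnegative integers). -/

import Mathlib

/-!
At a maximizer `t` the symmetric second difference `f(t + h) + f(t - h) - 2 f(t)` is `≤ 0` for
every `h`; since `f_α` is `1`-periodic, a maximizer on `[0, 1]` is a global maximizer.
At an integer, `h = 1/2` gives second difference `1`. At `t = k / 2^(n+1)` with `k` odd and
`h = 2^(-N)`, the second difference of the tent `φ(2^m ·)` vanishes for `m < n` (where it is
affine around `2^m t`) and for `m ≥ N` (where `2^m h` is a period); at `m = n` the point `2^n t`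
is a peak and for `n < m < N` it is a valley. Hence the second difference of `f_α` is
`2^(1-N) (α^(n+1) + ⋯ + α^(N-1) - α^n)`, which is positive for large `N` because
`α + α² + ⋯ > 1` when `α > 1/2`.
-/

open MeasureTheory Filter Set

/-- The tent map: distance to the nearest integer. -/
noncomputable def phi (t : ℝ) : ℝ := ⨅ z : ℤ, |t - (z : ℝ)|

/-- A function in the Takagi class, for coefficient sequence `c`. -/
noncomputable def takagiF (c : ℕ → ℝ) (t : ℝ) : ℝ := ∑' m : ℕ, c m * phi (2 ^ m * t)

/-- `T(ρ) = Σ 2^{-(n+2)} (1 - ρ n)`. -/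
noncomputable def Trho (ρ : ℕ → ℝ) : ℝ := ∑' n : ℕ, (1 - ρ n) / 2 ^ (n + 2)

/-- A `{-1,+1}`-valued sequence. -/
def IsSign (ρ : ℕ → ℝ) : Prop := ∀ n, ρ n = 1 ∨ ρ n = -1

/-- `ρ` is a Rademacher expansion of `t`. -/
def IsRademacherExp (ρ : ℕ → ℝ) (t : ℝ) : Prop := IsSign ρ ∧ Trho ρ = t

/-- The step condition for coefficients `c`. -/
def StepCond (c : ℕ → ℝ) (ρ : ℕ → ℝ) : Prop :=
  ∀ n : ℕ, 1 ≤ n → ρ n * ∑ m ∈ Finset.range n, 2 ^ m * c m * ρ m ≤ 0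

noncomputable def sharpAux (c : ℕ → ℝ) : ℕ → ℝ × ℝ
  | 0 => (1, c 0)
  | n + 1 =>
    let S := (sharpAux c n).2
    let r : ℝ := if S ≤ 0 then 1 else -1
    (r, S + 2 ^ (n + 1) * c (n + 1) * r)

/-- The sequence `ρ♯` for coefficients `c`. -/
noncomputable def rhoSharp (c : ℕ → ℝ) (n : ℕ) : ℝ := (sharpAux c n).1

noncomputable def flatAux (c : ℕ → ℝ) : ℕ → ℝ × ℝ
  | 0 => (1, c 0)
  | n + 1 =>
    let S := (flatAux c n).2
    let r : ℝ := if S < 0 then 1 else -1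
    (r, S + 2 ^ (n + 1) * c (n + 1) * r)

/-- The sequence `ρ♭` for coefficients `c`. -/
noncomputable def rhoFlat (c : ℕ → ℝ) (n : ℕ) : ℝ := (flatAux c n).1

/-- The Takagi–Landsberg function with parameter `α`. -/
noncomputable def fTL (α : ℝ) (t : ℝ) : ℝ := ∑' m : ℕ, α ^ m / 2 ^ m * phi (2 ^ m * t)

noncomputable def sharpAuxTL (α : ℝ) : ℕ → ℝ × ℝ
  | 0 => (1, 1)
  | n + 1 =>
    let S := (sharpAuxTL α n).2
    let r : ℝ := if S ≤ 0 then 1 else -1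
    (r, S + α ^ (n + 1) * r)

/-- The sequence `ρ♯(α)` for the Takagi–Landsberg function. -/
noncomputable def rhoSharpTL (α : ℝ) (n : ℕ) : ℝ := (sharpAuxTL α n).1

noncomputable def flatAuxTL (α : ℝ) : ℕ → ℝ × ℝ
  | 0 => (1, 1)
  | n + 1 =>
    let S := (flatAuxTL α n).2
    let r : ℝ := if S < 0 then 1 else -1
    (r, S + α ^ (n + 1) * r)

/-- The sequence `ρ♭(α)` for the Takagi–Landsberg function. -/
noncomputable def rhoFlatTL (α : ℝ) (n : ℕ) : ℝ := (flatAuxTL α n).1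

/-- `τ♯(α) = T(ρ♯(α))`. -/
noncomputable def tauSharp (α : ℝ) : ℝ := Trho (rhoSharpTL α)

/-- `τ♭(α) = T(ρ♭(α))`. -/
noncomputable def tauFlat (α : ℝ) : ℝ := Trho (rhoFlatTL α)

/-- The Littlewood polynomial `p_{2n}(x) = 1 - x - x² - ⋯ - x^{2n}`. -/
noncomputable def p2n (n : ℕ) (x : ℝ) : ℝ := 1 - ∑ m ∈ Finset.Icc 1 (2 * n), x ^ m

lemma phi_le (t : ℝ) (z : ℤ) : phi t ≤ |t - z| :=
  ciInf_le ⟨0, by rintro _ ⟨w, rfl⟩; positivity⟩ z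

lemma phi_nonneg (t : ℝ) : 0 ≤ phi t :=
  le_ciInf fun _ => abs_nonneg _

lemma phi_le_half (t : ℝ) : phi t ≤ 1 / 2 :=
  (phi_le t (round t)).trans (abs_sub_round t)

lemma phi_eq_abs_sub_of_abs_le {t : ℝ} (z : ℤ) (h : |t - z| ≤ 1 / 2) : phi t = |t - z| := by
  refine le_antisymm (phi_le t z) (le_ciInf fun w => ?_)
  rcases eq_or_ne w z with rfl | hwz
  · rfl
  have hdist : (1 : ℝ) ≤ |(w : ℝ) - z| := by
    exact_mod_cast Int.one_le_abs (sub_ne_zero.2 hwz)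
  have := abs_sub_le (w : ℝ) t z
  rw [abs_sub_comm (w : ℝ) t] at this
  linarith

lemma phi_add_intCast (t : ℝ) (z : ℤ) : phi (t + z) = phi t := by
  refine le_antisymm (le_ciInf fun w => ?_) (le_ciInf fun w => ?_)
  · simpa [add_sub_add_right_eq_sub] using phi_le (t + z) (w + z)
  · simpa [sub_sub_eq_add_sub] using phi_le t (w - z)

lemma phi_sub_intCast (t : ℝ) (z : ℤ) : phi (t - z) = phi t := by
  simpa [sub_eq_add_neg] using phi_add_intCast t (-z)

def secondDiff (f : ℝ → ℝ) (x h : ℝ) : ℝ := f (x + h) + f (x - h) - 2 * f x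

lemma secondDiff_phi_intCast_right (x : ℝ) (z : ℤ) : secondDiff phi x z = 0 := by
  rw [secondDiff, phi_add_intCast, phi_sub_intCast]
  ring

lemma secondDiff_phi_intCast {δ : ℝ} (z : ℤ) (h₀ : 0 ≤ δ) (h₁ : δ ≤ 1 / 2) :
    secondDiff phi z δ = 2 * δ := by
  have hδ : |δ| ≤ 1 / 2 := by rwa [abs_of_nonneg h₀]
  rw [secondDiff, phi_eq_abs_sub_of_abs_le z (by simpa using hδ),
    phi_eq_abs_sub_of_abs_le z (by simpa using hδ), phi_eq_abs_sub_of_abs_le z (by simp)]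
  simp only [add_sub_cancel_left, abs_of_nonneg h₀, sub_sub_cancel_left, abs_neg, sub_self,
    abs_zero, mul_zero, sub_zero]
  ring

lemma secondDiff_phi_intCast_add_half {δ : ℝ} (z : ℤ) (h₀ : 0 ≤ δ) (h₁ : δ ≤ 1 / 2) :
    secondDiff phi (z + 1 / 2) δ = -(2 * δ) := by
  have hl : |(z : ℝ) + 1 / 2 + δ - (z + 1 : ℤ)| = 1 / 2 - δ := by
    push_cast
    rw [show (z : ℝ) + 1 / 2 + δ - (z + 1) = -(1 / 2 - δ) by ring, abs_neg,
      abs_of_nonneg (by linarith)]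
  have hr : |(z : ℝ) + 1 / 2 - δ - z| = 1 / 2 - δ := by
    rw [show (z : ℝ) + 1 / 2 - δ - z = 1 / 2 - δ by ring, abs_of_nonneg (by linarith)]
  have hc : |(z : ℝ) + 1 / 2 - z| = 1 / 2 := by norm_num
  rw [secondDiff, phi_eq_abs_sub_of_abs_le _ (by rw [hl]; linarith), hl,
    phi_eq_abs_sub_of_abs_le _ (by rw [hr]; linarith), hr,
    phi_eq_abs_sub_of_abs_le _ hc.le, hc]
  ring

-- `phi` is affine on every interval `[a/2, (a+1)/2]`.
lemma secondDiff_phi_eq_zero {x δ : ℝ} (a : ℤ) (h₀ : 0 ≤ δ) (h₁ : a / 2 ≤ x - δ)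
    (h₂ : x + δ ≤ (a + 1) / 2) : secondDiff phi x δ = 0 := by
  obtain ⟨b, rfl | rfl⟩ := Int.even_or_odd' a
  · have h : ∀ y : ℝ, b ≤ y → y ≤ b + 1 / 2 → phi y = y - b := fun y hy₁ hy₂ => by
      rw [phi_eq_abs_sub_of_abs_le b (abs_le.2 ⟨by linarith, by linarith⟩),
        abs_of_nonneg (by linarith)]
    push_cast at h₁ h₂
    rw [secondDiff, h (x + δ) (by linarith) (by linarith), h (x - δ) (by linarith)
      (by linarith), h x (by linarith) (by linarith)]
    ring
  · have h : ∀ y : ℝ, b + 1 / 2 ≤ y → y ≤ b + 1 → phi y = b + 1 - y := fun y hy₁ hy₂ => by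
      rw [phi_eq_abs_sub_of_abs_le (b + 1) (abs_le.2 ⟨by push_cast; linarith,
        by push_cast; linarith⟩), abs_of_nonpos (by push_cast; linarith)]
      push_cast
      ring
    push_cast at h₁ h₂
    rw [secondDiff, h (x + δ) (by linarith) (by linarith), h (x - δ) (by linarith)
      (by linarith), h x (by linarith) (by linarith)]
    ring

lemma secondDiff_phi_natCast_div_eq_zero {k e : ℕ} {δ : ℝ} (hk : ¬ 2 ^ e ∣ k) (h₀ : 0 ≤ δ)
    (h₁ : δ ≤ 1 / 2 ^ (e + 1)) : secondDiff phi (k / 2 ^ (e + 1)) δ = 0 := by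
  set q := k / 2 ^ e
  set r := k % 2 ^ e
  have hr₀ : (1 : ℝ) ≤ r := by
    exact_mod_cast Nat.pos_of_ne_zero fun h => hk (Nat.dvd_of_mod_eq_zero h)
  have hr₁ : (r : ℝ) + 1 ≤ 2 ^ e := by exact_mod_cast Nat.mod_lt k (by positivity : 0 < 2 ^ e)
  set c : ℝ := 1 / 2 ^ (e + 1)
  have hc : 2 ^ e * c = 1 / 2 := by simp only [c, pow_succ]; field_simp
  have hx : (k : ℝ) / 2 ^ (e + 1) = (q : ℤ) / 2 + r * c := by
    have hk : (k : ℝ) = 2 ^ e * q + r := by exact_mod_cast (Nat.div_add_mod k (2 ^ e)).symm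
    rw [hk]
    simp only [c, pow_succ]
    push_cast
    field_simp
  have hrc₀ : c ≤ r * c := le_mul_of_one_le_left (by positivity) hr₀
  have hrc₁ : (r + 1) * c ≤ 2 ^ e * c := mul_le_mul_of_nonneg_right hr₁ (by positivity)
  refine secondDiff_phi_eq_zero q h₀ ?_ ?_ <;> rw [hx] <;> push_cast <;> linarith

lemma secondDiff_phi_two_pow_mul_of_le (x : ℝ) {m N : ℕ} (h : N ≤ m) :
    secondDiff phi (2 ^ m * x) (2 ^ m * (1 / 2 ^ N)) = 0 := by
  obtain ⟨d, rfl⟩ := Nat.exists_eq_add_of_le h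
  have hδ : (2 : ℝ) ^ (N + d) * (1 / 2 ^ N) = ((2 ^ d : ℕ) : ℤ) := by
    push_cast
    rw [pow_add]
    field_simp
  rw [hδ, secondDiff_phi_intCast_right]

section Dyadic

variable {k n N m : ℕ}

lemma secondDiff_phi_dyadic_of_lt (hk : Odd k) (hnN : n < N) (hm : m < n) :
    secondDiff phi (2 ^ m * (k / 2 ^ (n + 1))) (2 ^ m * (1 / 2 ^ N)) = 0 := by
  obtain ⟨e, rfl⟩ := Nat.exists_eq_add_of_lt hm
  have hx : (2 : ℝ) ^ m * (k / 2 ^ (m + e + 1 + 1)) = k / 2 ^ (e + 1 + 1) := by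
    rw [show m + e + 1 + 1 = m + (e + 1 + 1) by ring, pow_add]
    field_simp
  have hk' : ¬ 2 ^ (e + 1) ∣ k := fun h =>
    (Nat.not_even_iff_odd.2 hk) (even_iff_two_dvd.2 ((dvd_pow_self 2 e.succ_ne_zero).trans h))
  have hδ : (2 : ℝ) ^ m * (1 / 2 ^ N) ≤ 1 / 2 ^ (e + 1 + 1) := by
    calc (2 : ℝ) ^ m * (1 / 2 ^ N) ≤ 2 ^ m * (1 / 2 ^ (m + (e + 1 + 1))) := by
          gcongr
          exacts [one_le_two, by omega]
      _ = 1 / 2 ^ (e + 1 + 1) := by rw [pow_add]; field_simp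
  rw [hx]
  exact secondDiff_phi_natCast_div_eq_zero hk' (by positivity) hδ

lemma secondDiff_phi_dyadic_self (hk : Odd k) (hnN : n < N) :
    secondDiff phi (2 ^ n * (k / 2 ^ (n + 1))) (2 ^ n * (1 / 2 ^ N)) =
      -(2 * (2 ^ n * (1 / 2 ^ N))) := by
  obtain ⟨j, rfl⟩ := hk
  have hx : (2 : ℝ) ^ n * ((2 * j + 1 : ℕ) / 2 ^ (n + 1)) = (j : ℤ) + 1 / 2 := by
    push_cast
    rw [pow_succ]
    field_simp
  have hδ : (2 : ℝ) ^ n * (1 / 2 ^ N) ≤ 1 / 2 := by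
    calc (2 : ℝ) ^ n * (1 / 2 ^ N) ≤ 2 ^ n * (1 / 2 ^ (n + 1)) := by
          gcongr
          exacts [one_le_two, hnN]
      _ = 1 / 2 := by rw [pow_succ]; field_simp
  rw [hx, secondDiff_phi_intCast_add_half j (by positivity) hδ]

lemma secondDiff_phi_dyadic_of_lt_of_lt (hnm : n < m) (hmN : m < N) :
    secondDiff phi (2 ^ m * (k / 2 ^ (n + 1))) (2 ^ m * (1 / 2 ^ N)) =
      2 * (2 ^ m * (1 / 2 ^ N)) := by
  obtain ⟨d, rfl⟩ := Nat.exists_eq_add_of_le hnm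
  have hx : (2 : ℝ) ^ (n + 1 + d) * (k / 2 ^ (n + 1)) = ((2 ^ d * k : ℕ) : ℤ) := by
    push_cast
    rw [pow_add]
    field_simp
  have hδ : (2 : ℝ) ^ (n + 1 + d) * (1 / 2 ^ N) ≤ 1 / 2 := by
    calc (2 : ℝ) ^ (n + 1 + d) * (1 / 2 ^ N)
      _ ≤ 2 ^ (n + 1 + d) * (1 / 2 ^ (n + 1 + d + 1)) := by
          gcongr
          exacts [one_le_two, hmN]
      _ = 1 / 2 := by rw [pow_succ]; field_simp
  rw [hx, secondDiff_phi_intCast _ (by positivity) hδ]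

end Dyadic

lemma fTL_add_intCast (α t : ℝ) (z : ℤ) : fTL α (t + z) = fTL α t := by
  unfold fTL
  congr with m
  rw [mul_add, show (2 : ℝ) ^ m * z = ((2 ^ m * z : ℤ) : ℝ) by push_cast; ring, phi_add_intCast]

section TakagiLandsberg

variable {α : ℝ}

lemma summable_fTL (hα : |α| < 2) (t : ℝ) :
    Summable fun m : ℕ => α ^ m / 2 ^ m * phi (2 ^ m * t) := by
  refine Summable.of_norm_bounded ((summable_geometric_of_lt_one (by positivity)
    (by linarith : |α| / 2 < 1)).mul_right (1 / 2)) fun m => ?_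
  rw [norm_mul, Real.norm_eq_abs, Real.norm_eq_abs, abs_of_nonneg (phi_nonneg _), abs_div,
    abs_pow, abs_pow, abs_two, ← div_pow]
  exact mul_le_mul_of_nonneg_left (phi_le_half _) (by positivity)

lemma secondDiff_fTL (hα : |α| < 2) (x h : ℝ) :
    secondDiff (fTL α) x h =
      ∑' m : ℕ, α ^ m / 2 ^ m * secondDiff phi (2 ^ m * x) (2 ^ m * h) := by
  have hs := summable_fTL hα
  rw [secondDiff, fTL, fTL, fTL, ← (hs _).tsum_add (hs _), ← tsum_mul_left,
    ← ((hs _).add (hs _)).tsum_sub ((hs _).mul_left 2)]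
  congr with m
  rw [secondDiff, mul_add, mul_sub]
  ring

lemma secondDiff_fTL_intCast (hα : |α| < 2) (z : ℤ) : secondDiff (fTL α) z (1 / 2) = 1 := by
  rw [secondDiff_fTL hα, tsum_eq_single 0]
  · norm_num [secondDiff_phi_intCast z (by norm_num : (0 : ℝ) ≤ 1 / 2) le_rfl]
  · intro m hm
    rw [show (1 / 2 : ℝ) = 1 / 2 ^ 1 by norm_num,
      secondDiff_phi_two_pow_mul_of_le _ (Nat.one_le_iff_ne_zero.2 hm), mul_zero]

lemma secondDiff_fTL_dyadic (hα : |α| < 2) {k n N : ℕ} (hk : Odd k) (hnN : n < N) :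
    secondDiff (fTL α) (k / 2 ^ (n + 1)) (1 / 2 ^ N) =
      2 / 2 ^ N * (∑ m ∈ Finset.Ico (n + 1) N, α ^ m - α ^ n) := by
  set g : ℕ → ℝ := fun m => α ^ m / 2 ^ m *
    secondDiff phi (2 ^ m * (k / 2 ^ (n + 1))) (2 ^ m * (1 / 2 ^ N))
  have hscale : ∀ m, α ^ m / 2 ^ m * (2 * (2 ^ m * (1 / 2 ^ N))) = 2 / 2 ^ N * α ^ m := by
    intro m
    field_simp
  have hlow : ∑ m ∈ Finset.range (n + 1), g m = -(2 / 2 ^ N * α ^ n) := by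
    rw [Finset.sum_range_succ, Finset.sum_eq_zero fun m hm => by
      simp only [g, secondDiff_phi_dyadic_of_lt hk hnN (Finset.mem_range.1 hm), mul_zero]]
    simp only [g, secondDiff_phi_dyadic_self hk hnN, mul_neg, hscale, zero_add]
  have hmid :
      ∑ m ∈ Finset.Ico (n + 1) N, g m = 2 / 2 ^ N * ∑ m ∈ Finset.Ico (n + 1) N, α ^ m := by
    rw [Finset.mul_sum]
    refine Finset.sum_congr rfl fun m hm => ?_
    obtain ⟨hnm, hmN⟩ := Finset.mem_Ico.1 hm
    simp only [g, secondDiff_phi_dyadic_of_lt_of_lt hnm hmN, hscale]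
  rw [secondDiff_fTL hα, tsum_eq_sum (s := Finset.range N) fun m hm => by
      simp only [secondDiff_phi_two_pow_mul_of_le _ (not_lt.1 (Finset.mem_range.not.1 hm)),
        mul_zero],
    ← Finset.sum_range_add_sum_Ico _ hnN, hlow, hmid]
  ring

end TakagiLandsberg

lemma secondDiff_nonpos_of_forall_le {f : ℝ → ℝ} {x : ℝ} (h : ∀ y, f y ≤ f x) (δ : ℝ) :
    secondDiff f x δ ≤ 0 := by
  have := h (x + δ)
  have := h (x - δ)
  rw [secondDiff]
  linarith

lemma natCast_div_two_pow_eq_intCast_or_odd (k n : ℕ) :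
    (∃ z : ℤ, (k : ℝ) / 2 ^ n = z) ∨
      ∃ k' n' : ℕ, Odd k' ∧ (k : ℝ) / 2 ^ n = k' / 2 ^ (n' + 1) := by
  by_cases hdvd : 2 ^ n ∣ k
  · obtain ⟨j, rfl⟩ := hdvd
    refine Or.inl ⟨j, ?_⟩
    push_cast
    field_simp
  obtain ⟨v, o, ho, rfl⟩ :=
    Nat.exists_eq_two_pow_mul_odd (n := k) fun hk => hdvd (hk ▸ dvd_zero _)
  have hvn : v < n := by
    by_contra! h
    exact hdvd (Dvd.dvd.mul_right (pow_dvd_pow 2 h) o)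
  obtain ⟨d, rfl⟩ := Nat.exists_eq_add_of_lt hvn
  refine Or.inr ⟨o, d, ho, ?_⟩
  push_cast
  rw [show v + d + 1 = v + (d + 1) by ring, pow_add]
  field_simp

lemma exists_one_lt_sum_range_pow_succ {α : ℝ} (hα : 1 / 2 < α) :
    ∃ J : ℕ, 1 < ∑ j ∈ Finset.range J, α ^ (j + 1) := by
  by_cases hα₁ : α < 1
  · have hsum : HasSum (fun j : ℕ => α ^ (j + 1)) (α * (1 - α)⁻¹) := by
      simpa only [pow_succ'] using (hasSum_geometric_of_lt_one (by linarith) hα₁).mul_left α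
    have hgt : 1 < α * (1 - α)⁻¹ := by
      rw [← div_eq_mul_inv, one_lt_div (by linarith)]
      linarith
    exact (hsum.tendsto_sum_nat.eventually (lt_mem_nhds hgt)).exists
  · refine ⟨2, ?_⟩
    calc (1 : ℝ) < α + α ^ 2 := by nlinarith
      _ = ∑ j ∈ Finset.range 2, α ^ (j + 1) := by simp [Finset.sum_range_succ]

lemma exists_pow_lt_sum_Ico_pow {α : ℝ} (hα : 1 / 2 < α) (n : ℕ) :
    ∃ N, n < N ∧ α ^ n < ∑ m ∈ Finset.Ico (n + 1) N, α ^ m := by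
  obtain ⟨J, hJ⟩ := exists_one_lt_sum_range_pow_succ hα
  refine ⟨n + 1 + J, by omega, ?_⟩
  have hsum : ∑ m ∈ Finset.Ico (n + 1) (n + 1 + J), α ^ m =
      α ^ n * ∑ j ∈ Finset.range J, α ^ (j + 1) := by
    rw [Finset.sum_Ico_eq_sum_range, Nat.add_sub_cancel_left, Finset.mul_sum]
    refine Finset.sum_congr rfl fun j _ => ?_
    ring
  rw [hsum]
  exact lt_mul_of_one_lt_right (pow_pos (by linarith) n) hJ

theorem takagi_landsberg_no_dyadic_maximizer_general
    (α : ℝ) (hα : α ∈ Set.Ioo (1 / 2 : ℝ) 2)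
    (t : ℝ)
    (hmax : ∀ s ∈ Set.Icc (0 : ℝ) 1, fTL α s ≤ fTL α t) :
    ¬∃ (k : ℕ) (n : ℕ), t = (k : ℝ) / 2 ^ n := by
  rintro ⟨k, n, rfl⟩
  obtain ⟨hα₁, hα₂⟩ := hα
  have hα' : |α| < 2 := abs_lt.2 ⟨by linarith, hα₂⟩
  have hglobal : ∀ s, fTL α s ≤ fTL α (k / 2 ^ n) := fun s => by
    rw [← Int.fract_add_floor s, fTL_add_intCast]
    exact hmax _ ⟨Int.fract_nonneg s, (Int.fract_lt_one s).le⟩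
  rcases natCast_div_two_pow_eq_intCast_or_odd k n with ⟨z, hz⟩ | ⟨k', n', hk', hk⟩
  · have hnonpos := secondDiff_nonpos_of_forall_le hglobal (1 / 2)
    rw [hz, secondDiff_fTL_intCast hα'] at hnonpos
    linarith
  · obtain ⟨N, hnN, hsum⟩ := exists_pow_lt_sum_Ico_pow hα₁ n'
    have hnonpos := secondDiff_nonpos_of_forall_le hglobal (1 / 2 ^ N)
    rw [hk, secondDiff_fTL_dyadic hα' hk' hnN] at hnonpos
    have hpos : 0 < 2 / 2 ^ N * (∑ m ∈ Finset.Ico (n' + 1) N, α ^ m - α ^ n') :=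
      mul_pos (by positivity) (sub_pos.2 hsum)
    linarith

theorem takagi_landsberg_no_dyadic_maximizer
    (α : ℝ) (hα : α ∈ Set.Ioo (1 / 2 : ℝ) 2)
    (t : ℝ) (ht : t ∈ Set.Icc (0 : ℝ) 1)
    (hmax : ∀ s ∈ Set.Icc (0 : ℝ) 1, fTL α s ≤ fTL α t) :
    ¬∃ (k : ℕ) (n : ℕ), t = (k : ℝ) / 2 ^ n :=
  takagi_landsberg_no_dyadic_maximizer_general α hα t hmax
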